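/- Define the Frank-Wolfe gap g_t = ⟨∇U(a^{(t)}), s^{(t)} − a^{(t)}⟩. For the Frank-Wolfe iterates with step size γ_t = 2/(t+2) and for every t ≥ 2, there exists an index k with 1 ≤ k ≤ t such that g_k ≤ 2βC/(t+2), where β = 27/8; equivalently, min_{1 ≤ k ≤ t} g_k ≤ 27C/(4(t+2)). -/

import Mathlib

/-!
Write `u k = U (a k)` and `γ k = 2 / (k + 2)`. The curvature bound gives the descent
inequality `u (k+1) ≥ u k + γ k g k - γ k ² C / 2`, and concavity with the choice of `s k` gives
`g k ≥ U y - u k` for every `y ∈ M`, in particular for every iterate `y = a j`. Together they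
give `U y - u (k+1) ≤ (1 - γ k) (U y - u k) + γ k ² C / 2`, hence `U y - u k ≤ 2C/(k+2)` for
`k ≥ 1`. Summing the descent inequality over `t/2 ≤ k ≤ t` and comparing with `y = a (t+1)`
bounds a `γ`-weighted average of the gaps `g k` by `27C/(4(t+2))`, so some `g k` lies below it.
-/

open scoped RealInnerProductSpace
open Finset

theorem ConcaveOn.sub_le_inner_gradient {F : Type*} [NormedAddCommGroup F] [InnerProductSpace ℝ F]
    [CompleteSpace F] {M : Set F} {U : F → ℝ} (hU : ConcaveOn ℝ M U) {x y : F} (hx : x ∈ M)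
    (hy : y ∈ M) (hUx : DifferentiableAt ℝ U x) :
    U y - U x ≤ ⟪gradient U x, y - x⟫ := by
  have hline :
      ConcaveOn ℝ ((AffineMap.lineMap x y : ℝ → F) ⁻¹' M) (U ∘ AffineMap.lineMap x y) :=
    hU.comp_affineMap _
  have hderiv : HasDerivAt (U ∘ AffineMap.lineMap x y) ⟪gradient U x, y - x⟫ (0 : ℝ) := by
    rw [inner_gradient_left]
    have hUx' : HasFDerivAt U (fderiv ℝ U x) (AffineMap.lineMap x y (0 : ℝ)) := by
      simpa using hUx.hasFDerivAt
    exact hUx'.comp_hasDerivAt 0 AffineMap.hasDerivAt_lineMap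
  simpa [slope_def_field] using
    hline.slope_le_of_hasDerivAt (by simpa using hx) (by simpa using hy) one_pos hderiv

theorem frankWolfe_iterate_mem {E : Type*} [AddCommGroup E] [Module ℝ E] {M : Set E}
    (hM : Convex ℝ M) {γ : ℕ → ℝ} (hγ : ∀ t, γ t ∈ Set.Icc 0 1) {a s : ℕ → E} (ha0 : a 0 ∈ M)
    (hs : ∀ t, s t ∈ M) (hupd : ∀ t, a (t + 1) = a t + γ t • (s t - a t)) (t : ℕ) :
    a t ∈ M := by
  induction t with
  | zero => exact ha0
  | succ t ih => exact hupd t ▸ hM.add_smul_sub_mem ih (hs t) (hγ t)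

noncomputable def fwStepSize (k : ℕ) : ℝ := 2 / (k + 2)

lemma fwStepSize_pos (k : ℕ) : 0 < fwStepSize k := by unfold fwStepSize; positivity

lemma fwStepSize_le_one (k : ℕ) : fwStepSize k ≤ 1 := by
  unfold fwStepSize; rw [div_le_one (by positivity)]; linarith [k.cast_nonneg (α := ℝ)]

lemma fwStepSize_antitone : Antitone fwStepSize := by
  intro j k hjk
  unfold fwStepSize
  gcongr

lemma fwStepSize_sq_le (k : ℕ) : fwStepSize k ^ 2 ≤ 4 / (k + 1) - 4 / ((k + 1 : ℕ) + 1) := by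
  unfold fwStepSize
  push_cast
  rw [div_sub_div _ _ (by positivity) (by positivity), div_pow,
    div_le_div_iff₀ (by positivity) (by positivity)]
  nlinarith [k.cast_nonneg (α := ℝ)]

lemma sum_fwStepSize_sq_le (K t : ℕ) (hKt : K ≤ t) :
    ∑ k ∈ Icc K t, fwStepSize k ^ 2 ≤ 4 / (K + 1) - 4 / (t + 2) := by
  have htel := sum_Icc_sub (f := fun k : ℕ => (4 : ℝ) / (k + 1)) hKt
  rw [sum_sub_distrib] at htel
  calc ∑ k ∈ Icc K t, fwStepSize k ^ 2
      ≤ ∑ k ∈ Icc K t, (4 / (k + 1) - 4 / ((k + 1 : ℕ) + 1 : ℝ)) :=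
        sum_le_sum fun k _ => fwStepSize_sq_le k
    _ = 4 / (K + 1) - 4 / (t + 2) := by
        rw [sum_sub_distrib, show (t : ℝ) + 2 = t + 1 + 1 by ring]
        push_cast at htel ⊢
        linarith

lemma le_sum_fwStepSize (K t : ℕ) (hKt : K ≤ t) :
    (t + 1 - K) * fwStepSize t ≤ ∑ k ∈ Icc K t, fwStepSize k := by
  have hcard : ((Icc K t).card : ℝ) = t + 1 - K := by
    rw [Nat.card_Icc, Nat.cast_sub (by omega)]; push_cast; ring
  rw [← hcard, ← nsmul_eq_mul]
  exact card_nsmul_le_sum _ _ _ fun k hk => fwStepSize_antitone (mem_Icc.mp hk).2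

theorem le_of_fw_recursion {r : ℕ → ℝ} {C : ℝ} (hC : 0 ≤ C)
    (hr : ∀ k, r (k + 1) ≤ (1 - fwStepSize k) * r k + fwStepSize k ^ 2 / 2 * C) (k : ℕ)
    (hk : 1 ≤ k) : r k ≤ 2 * C / (k + 2) := by
  induction k, hk using Nat.le_induction with
  | base =>
    have := hr 0
    norm_num [fwStepSize] at this ⊢
    linarith
  | succ k hk ih =>
    have hk' : (1 : ℝ) ≤ k := by exact_mod_cast hk
    calc r (k + 1) ≤ (1 - fwStepSize k) * r k + fwStepSize k ^ 2 / 2 * C := hr k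
      _ ≤ (1 - fwStepSize k) * (2 * C / (k + 2)) + fwStepSize k ^ 2 / 2 * C := by
        gcongr
        linarith [fwStepSize_le_one k]
      _ = 2 * C * (k + 1) / (k + 2) ^ 2 := by
        unfold fwStepSize; field_simp; ring
      _ ≤ 2 * C / ((k + 1 : ℕ) + 2) := by
        push_cast
        rw [div_le_div_iff₀ (by positivity) (by positivity)]
        nlinarith [mul_nonneg hC (by linarith : (0:ℝ) ≤ k)]

lemma add_sum_sq_fwStepSize_le (t : ℕ) (ht : 2 ≤ t) {C : ℝ} (hC : 0 ≤ C) :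
    2 * C / ((t / 2 : ℕ) + 2) + C / 2 * ∑ k ∈ Icc (t / 2) t, fwStepSize k ^ 2
      ≤ 2 * (27 / 8) * C / (t + 2) * ∑ k ∈ Icc (t / 2) t, fwStepSize k := by
  set K := t / 2
  have hKt : K ≤ t := Nat.div_le_self t 2
  have h1 : (1 : ℝ) ≤ K := by exact_mod_cast (show 1 ≤ K by omega)
  have h2 : 2 * (K : ℝ) ≤ t := by exact_mod_cast (show 2 * K ≤ t by omega)
  have h3 : (t : ℝ) ≤ 2 * K + 1 := by exact_mod_cast (show t ≤ 2 * K + 1 by omega)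
  calc 2 * C / (K + 2) + C / 2 * ∑ k ∈ Icc K t, fwStepSize k ^ 2
      ≤ 2 * C / (K + 2) + C / 2 * (4 / (K + 1) - 4 / (t + 2)) := by
        gcongr; exact sum_fwStepSize_sq_le K t hKt
    _ ≤ 2 * (27 / 8) * C / (t + 2) * ((t + 1 - K) * fwStepSize t) := by
        unfold fwStepSize
        field_simp
        have key : ((t : ℝ) + 2) * (2 ^ 2 * (K + 1) * (t + 2) + (K + 2) * 4 * (t + 2 - (K + 1)))
            * 8 ≤ 2 ^ 3 * (K + 2) * (K + 1) * 27 * (t + 1 - K) := by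
          nlinarith [mul_nonneg (sub_nonneg.2 h1) (sub_nonneg.2 h2),
            mul_nonneg (sub_nonneg.2 h1) (sub_nonneg.2 h3),
            mul_nonneg (sub_nonneg.2 h2) (sub_nonneg.2 h3),
            mul_nonneg (sub_nonneg.2 h1) (sub_nonneg.2 h1)]
        nlinarith [mul_le_mul_of_nonneg_left key hC]
    _ ≤ 2 * (27 / 8) * C / (t + 2) * ∑ k ∈ Icc K t, fwStepSize k := by
        gcongr; exact le_sum_fwStepSize K t hKt

theorem exists_le_of_fw_descent {u g : ℕ → ℝ} {C : ℝ} (hC : 0 ≤ C)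
    (hdesc : ∀ k, u k + fwStepSize k * g k - fwStepSize k ^ 2 / 2 * C ≤ u (k + 1))
    (hgap : ∀ j k, u j - u k ≤ g k) (t : ℕ) (ht : 2 ≤ t) :
    ∃ k, 1 ≤ k ∧ k ≤ t ∧ g k ≤ 2 * (27 / 8) * C / (t + 2) := by
  set K := t / 2
  have hKt : K ≤ t := Nat.div_le_self t 2
  have hsubopt : u (t + 1) - u K ≤ 2 * C / (K + 2) := by
    refine le_of_fw_recursion (r := fun k => u (t + 1) - u k) hC (fun k => ?_) K (by omega)
    nlinarith [hdesc k, mul_le_mul_of_nonneg_left (hgap (t + 1) k) (fwStepSize_pos k).le]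
  have hsum : ∑ k ∈ Icc K t, fwStepSize k * g k
      ≤ 2 * C / (K + 2) + C / 2 * ∑ k ∈ Icc K t, fwStepSize k ^ 2 := by
    have htel := sum_Icc_sub (f := u) hKt
    have hterm : ∀ k ∈ Icc K t,
        fwStepSize k * g k ≤ u (k + 1) - u k + C / 2 * fwStepSize k ^ 2 :=
      fun k _ => by linarith [hdesc k]
    rw [mul_sum]
    linarith [sum_le_sum hterm, sum_add_distrib (s := Icc K t) (f := fun k => u (k + 1) - u k)
      (g := fun k => C / 2 * fwStepSize k ^ 2)]
  obtain ⟨k, hk, hgk⟩ := exists_le_of_sum_le (nonempty_Icc.2 hKt)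
    (f := fun k => fwStepSize k * g k)
    (g := fun k => fwStepSize k * (2 * (27 / 8) * C / (t + 2)))
    (by rw [← sum_mul, mul_comm]; exact hsum.trans (add_sum_sq_fwStepSize_le t ht hC))
  obtain ⟨hKk, hkt⟩ := mem_Icc.1 hk
  exact ⟨k, by omega, hkt, le_of_mul_le_mul_left hgk (fwStepSize_pos k)⟩

theorem stmt_11_general (d : ℕ) (M : Set (EuclideanSpace ℝ (Fin d)))
    (hMconv : Convex ℝ M)
    (U : EuclideanSpace ℝ (Fin d) → ℝ) (hU : ContDiff ℝ 1 U)
    (hconc : ConcaveOn ℝ M U) (C : ℝ) (hC : 0 ≤ C)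
    (hcurv : ∀ x ∈ M, ∀ s ∈ M, ∀ γ ∈ Set.Icc (0 : ℝ) 1,
      U x + γ * ⟪gradient U x, s - x⟫ - γ ^ 2 / 2 * C ≤ U (x + γ • (s - x)))
    (a s : ℕ → EuclideanSpace ℝ (Fin d)) (ha0 : a 0 ∈ M)
    (hsM : ∀ t, s t ∈ M)
    (hsmax : ∀ t, ∀ x ∈ M, ⟪gradient U (a t), x⟫ ≤ ⟪gradient U (a t), s t⟫)
    (hupd : ∀ t : ℕ, a (t + 1) = a t + (2 / ((t : ℝ) + 2)) • (s t - a t)) :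
    ∀ t : ℕ, 2 ≤ t → ∃ k : ℕ, 1 ≤ k ∧ k ≤ t ∧
      ⟪gradient U (a k), s k - a k⟫ ≤ 2 * (27 / 8) * C / ((t : ℝ) + 2) := by
  have hγ (t : ℕ) : fwStepSize t ∈ Set.Icc 0 1 := ⟨(fwStepSize_pos t).le, fwStepSize_le_one t⟩
  have haM : ∀ t, a t ∈ M := frankWolfe_iterate_mem hMconv hγ ha0 hsM hupd
  refine exists_le_of_fw_descent (u := U ∘ a) hC (fun k => ?_) (fun j k => ?_)
  · rw [Function.comp_apply, Function.comp_apply, hupd k]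
    exact hcurv (a k) (haM k) (s k) (hsM k) _ (hγ k)
  · calc U (a j) - U (a k) ≤ ⟪gradient U (a k), a j - a k⟫ :=
          hconc.sub_le_inner_gradient (haM k) (haM j) (hU.differentiable one_ne_zero _)
      _ ≤ ⟪gradient U (a k), s k - a k⟫ := by
          rw [inner_sub_right, inner_sub_right]; linarith [hsmax k (a j) (haM j)]

/-- For the Frank-Wolfe iterates with step size γ_t = 2/(t+2) and
Frank-Wolfe gap g_t = ⟪∇U(a^{(t)}), s^{(t)} − a^{(t)}⟫, for every t ≥ 2 there exists
an index k with 1 ≤ k ≤ t such that g_k ≤ 2βC/(t+2), where β = 27/8. -/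
theorem stmt_11 (d : ℕ) (M : Set (EuclideanSpace ℝ (Fin d)))
    (hMne : M.Nonempty) (hMconv : Convex ℝ M) (hMcomp : IsCompact M)
    (U : EuclideanSpace ℝ (Fin d) → ℝ) (hU : ContDiff ℝ 1 U)
    (hconc : ConcaveOn ℝ M U) (C : ℝ) (hC : 0 ≤ C)
    (hcurv : ∀ x ∈ M, ∀ s ∈ M, ∀ γ ∈ Set.Icc (0 : ℝ) 1,
      U x + γ * ⟪gradient U x, s - x⟫ - γ ^ 2 / 2 * C ≤ U (x + γ • (s - x)))
    (a s : ℕ → EuclideanSpace ℝ (Fin d)) (ha0 : a 0 ∈ M)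
    (hsM : ∀ t, s t ∈ M)
    (hsmax : ∀ t, ∀ x ∈ M, ⟪gradient U (a t), x⟫ ≤ ⟪gradient U (a t), s t⟫)
    (hupd : ∀ t : ℕ, a (t + 1) = a t + (2 / ((t : ℝ) + 2)) • (s t - a t)) :
    ∀ t : ℕ, 2 ≤ t → ∃ k : ℕ, 1 ≤ k ∧ k ≤ t ∧
      ⟪gradient U (a k), s k - a k⟫ ≤ 2 * (27 / 8) * C / ((t : ℝ) + 2) :=
  stmt_11_general d M hMconv U hU hconc C hC hcurv a s ha0 hsM hsmax hupd
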